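/- arXiv:2603.18193 — 2 statements merged into one kernel-verified Lean document; each statement's English description precedes it below -/
import Mathlib

section
/- There exists an index j with 2k ≤ j ≤ 4k such that the determinant Δ_j is even. -/
/-- The `2k × 2k` matrix `M_j`, whose rows are indexed by `r ∈ {2k,…,4k} \ {j}` in
increasing order and whose columns are indexed by `i ∈ {1,…,2k−1}` in increasing order
followed by `j` as the last column, with entries `Γ_{r,i}`; its determinant is `Δ_j`. -/
def Mjmat (k : ℕ) (Γ : ℕ → ℕ → ℤ) (j : ℕ) : Matrix (Fin (2 * k)) (Fin (2 * k)) ℤ :=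
  Matrix.of fun t c =>
    Γ (if 2 * k + (t : ℕ) < j then 2 * k + (t : ℕ) else 2 * k + (t : ℕ) + 1)
      (if (c : ℕ) < 2 * k - 1 then (c : ℕ) + 1 else j)

/-- Row label of row `t` in `M_j`. -/
def rlab (k j t : ℕ) : ℕ := if 2 * k + t < j then 2 * k + t else 2 * k + t + 1

/-- The `s`-th element (0-indexed) of `{2k,…,4k} \ {j, r}` in increasing order. -/
def f2 (k j r s : ℕ) : ℕ :=
  if (if 2 * k + s < min j r then 2 * k + s else 2 * k + s + 1) < max j r
  then (if 2 * k + s < min j r then 2 * k + s else 2 * k + s + 1)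
  else (if 2 * k + s < min j r then 2 * k + s else 2 * k + s + 1) + 1

lemma f2_symm (k j r s : ℕ) : f2 k j r s = f2 k r j s := by
  simp [f2, min_comm, max_comm]

lemma rlab_succAbove (k j t s : ℕ) :
    rlab k j (if s < t then s else s + 1) = f2 k j (rlab k j t) s := by
  simp only [rlab, f2]
  split_ifs <;> omega

/-- The `(2k-1) × (2k-1)` minor matrix mod 2, rows `{2k,…,4k} \ {j,r}`, columns `1,…,2k-1`. -/
def Dmat (n k : ℕ) (G : ℕ → ℕ → ZMod 2) (j r : ℕ) : Matrix (Fin n) (Fin n) (ZMod 2) :=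
  Matrix.of fun s c => G (f2 k j r (s : ℕ)) ((c : ℕ) + 1)

lemma Dmat_symm (n k : ℕ) (G : ℕ → ℕ → ZMod 2) (j r : ℕ) :
    Dmat n k G j r = Dmat n k G r j := by
  ext s c
  simp [Dmat, f2_symm]

lemma val_succAbove {n : ℕ} (t : Fin (n + 1)) (s : Fin n) :
    ((t.succAbove s : Fin (n + 1)) : ℕ) = if (s : ℕ) < (t : ℕ) then (s : ℕ) else (s : ℕ) + 1 := by
  rcases Nat.lt_or_ge (s : ℕ) (t : ℕ) with h | h
  · rw [Fin.succAbove_of_castSucc_lt _ _ (by simpa [Fin.lt_def] using h), if_pos h,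
      Fin.coe_castSucc]
  · rw [Fin.succAbove_of_le_castSucc _ _ (by simpa [Fin.le_def] using h),
      if_neg (by omega), Fin.val_succ]

lemma det_expand (k n : ℕ) (hn : 2 * k = n + 1) (Γ : ℕ → ℕ → ℤ) (j : ℕ) :
    (((Mjmat k Γ j).det : ℤ) : ZMod 2) =
      ∑ t : Fin (n + 1),
        ((Γ (rlab k j (t : ℕ)) j : ℤ) : ZMod 2) *
          (Dmat n k (fun a b => ((Γ a b : ℤ) : ZMod 2)) j (rlab k j (t : ℕ))).det := by
  set G : ℕ → ℕ → ZMod 2 := fun a b => ((Γ a b : ℤ) : ZMod 2) with hG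
  have h1 : (((Mjmat k Γ j).det : ℤ) : ZMod 2)
      = ((Mjmat k Γ j).map ⇑(Int.castRingHom (ZMod 2))).det :=
    RingHom.map_det (Int.castRingHom (ZMod 2)) (Mjmat k Γ j)
  set M : Matrix (Fin (2 * k)) (Fin (2 * k)) (ZMod 2) :=
    (Mjmat k Γ j).map ⇑(Int.castRingHom (ZMod 2)) with hM
  have h2 : M.det = (M.submatrix (finCongr hn.symm) (finCongr hn.symm)).det :=
    (Matrix.det_submatrix_equiv_self (finCongr hn.symm) M).symm
  rw [h1, h2, Matrix.det_succ_column _ (Fin.last n)]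
  refine Finset.sum_congr rfl fun t _ => ?_
  have hneg : (-1 : ZMod 2) = 1 := by decide
  have hcol : ¬ ((Fin.last n : ℕ) < 2 * k - 1) := by simp [Fin.val_last]; omega
  have hentry : (M.submatrix (finCongr hn.symm) (finCongr hn.symm)) t (Fin.last n)
      = G (rlab k j (t : ℕ)) j := by
    simp only [hM, Matrix.submatrix_apply, Matrix.map_apply, Mjmat, Matrix.of_apply,
      finCongr_apply, Fin.coe_cast, Fin.val_last, Int.coe_castRingHom, rlab, hG]
    rw [if_neg (show ¬ n < 2 * k - 1 by omega)]
  have hsub : (M.submatrix (finCongr hn.symm) (finCongr hn.symm)).submatrix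
      t.succAbove (Fin.last n).succAbove = Dmat n k G j (rlab k j (t : ℕ)) := by
    ext s c
    have hc : ((Fin.castSucc c : Fin (n + 1)) : ℕ) < 2 * k - 1 := by
      simp [Fin.coe_castSucc]; omega
    have hrow : rlab k j ((t.succAbove s : Fin (n + 1)) : ℕ)
        = f2 k j (rlab k j (t : ℕ)) (s : ℕ) := by
      rw [val_succAbove]
      exact rlab_succAbove k j (t : ℕ) (s : ℕ)
    simp only [Matrix.submatrix_apply, Fin.succAbove_last, hM, Matrix.map_apply, Mjmat,
      Matrix.of_apply, Dmat, finCongr_apply, Fin.coe_cast, Int.coe_castRingHom]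
    rw [if_pos hc]
    simp only [Fin.coe_castSucc]
    rw [← hrow]
    simp [rlab, hG]
  rw [hentry, hsub, hneg, one_pow, one_mul]

/-- There exists an index `j` with `2k ≤ j ≤ 4k` such that `Δ_j` is even. -/
theorem exists_even_det (k : ℕ) (hk : 1 ≤ k) (Γ : ℕ → ℕ → ℤ)
    (hsymm : ∀ a b, a ∈ Finset.Icc 1 (4 * k) → b ∈ Finset.Icc 1 (4 * k) → Γ a b = Γ b a) :
    ∃ j ∈ Finset.Icc (2 * k) (4 * k), Even (Mjmat k Γ j).det := by
  by_contra hcon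
  push_neg at hcon
  set G : ℕ → ℕ → ZMod 2 := fun a b => ((Γ a b : ℤ) : ZMod 2) with hG
  obtain ⟨n, hn⟩ : ∃ n, 2 * k = n + 1 := ⟨2 * k - 1, by omega⟩
  set s : Finset ℕ := Finset.Icc (2 * k) (4 * k) with hs
  -- each det is odd, so its image in ZMod 2 is 1
  have hone : ∀ j ∈ s, (((Mjmat k Γ j).det : ℤ) : ZMod 2) = 1 := by
    intro j hj
    have h := hcon j hj
    have h0 : (((Mjmat k Γ j).det : ℤ) : ZMod 2) ≠ 0 := by
      simp only [ne_eq, ZMod.intCast_zmod_eq_zero_iff_dvd]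
      intro hd
      obtain ⟨c, hc⟩ := hd
      exact h ⟨c, by push_cast at hc; omega⟩
    revert h0
    generalize (((Mjmat k Γ j).det : ℤ) : ZMod 2) = x
    revert x
    decide
  -- the sum of all the dets mod 2 is 1 (odd number of odd terms)
  have hsum1 : ∑ j ∈ s, (((Mjmat k Γ j).det : ℤ) : ZMod 2) = 1 := by
    rw [Finset.sum_congr rfl hone, Finset.sum_const, Nat.card_Icc]
    have : 4 * k + 1 - 2 * k = 2 * k + 1 := by omega
    rw [this]
    have : ((2 * k + 1 : ℕ) : ZMod 2) = 1 := by
      push_cast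
      have h2 : ((2 : ℕ) : ZMod 2) = 0 := by decide
      push_cast [h2] at *
      ring_nf
      simp [h2]
    simp [this]
  -- but the sum is 0 by the pairing argument
  have hsum0 : ∑ j ∈ s, (((Mjmat k Γ j).det : ℤ) : ZMod 2) = 0 := by
    have hexp : ∀ j ∈ s, (((Mjmat k Γ j).det : ℤ) : ZMod 2)
        = ∑ r ∈ s.erase j, G r j * (Dmat n k G j r).det := by
      intro j hj
      rw [Finset.mem_Icc] at hj
      rw [det_expand k n hn Γ j]
      refine Finset.sum_bij (fun t _ => rlab k j (t : ℕ)) ?_ ?_ ?_ ?_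
      · intro t _
        simp only [Finset.mem_erase, hs, Finset.mem_Icc]
        have ht := t.isLt
        simp only [rlab]
        split_ifs <;> omega
      · intro a _ b _ hab
        apply Fin.ext
        simp only [rlab] at hab
        have ha := a.isLt
        have hb := b.isLt
        split_ifs at hab <;> omega
      · intro r hr
        simp only [Finset.mem_erase, hs, Finset.mem_Icc] at hr
        refine ⟨⟨if r < j then r - 2 * k else r - 2 * k - 1, by split_ifs <;> omega⟩, Finset.mem_univ _, ?_⟩
        simp only [rlab]
        split_ifs <;> omega
      · intro t _
        rfl
    rw [Finset.sum_congr rfl hexp]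
    have hprod : ∑ j ∈ s, ∑ r ∈ s.erase j, G r j * (Dmat n k G j r).det
        = ∑ p ∈ (s ×ˢ s).filter (fun p => p.2 ≠ p.1),
            G p.2 p.1 * (Dmat n k G p.1 p.2).det := by
      rw [Finset.sum_filter, Finset.sum_product]
      refine Finset.sum_congr rfl fun j hj => ?_
      rw [← Finset.sum_filter, Finset.filter_ne']
    rw [hprod]
    refine Finset.sum_involution (fun p _ => (p.2, p.1)) ?_ ?_ ?_ ?_
    · intro p hp
      simp only [Finset.mem_filter, Finset.mem_product, hs, Finset.mem_Icc] at hp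
      have hmem : ∀ a : ℕ, 2 * k ≤ a → a ≤ 4 * k → a ∈ Finset.Icc 1 (4 * k) := by
        intro a h1 h2
        rw [Finset.mem_Icc]
        omega
      have hGsymm : G p.1 p.2 = G p.2 p.1 := by
        simp only [hG]
        rw [hsymm p.1 p.2 (hmem _ hp.1.1.1 hp.1.1.2) (hmem _ hp.1.2.1 hp.1.2.2)]
      have : G p.1 p.2 * (Dmat n k G p.2 p.1).det = G p.2 p.1 * (Dmat n k G p.1 p.2).det := by
        rw [hGsymm, Dmat_symm]
      rw [this, ← two_mul]
      have h2 : (2 : ZMod 2) = 0 := by decide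
      rw [h2, zero_mul]
    · intro p hp _
      simp only [Finset.mem_filter] at hp
      intro hcon2
      exact hp.2 (congrArg Prod.fst hcon2)
    · intro p hp
      simp only [Finset.mem_filter, Finset.mem_product] at hp ⊢
      exact ⟨⟨hp.1.2, hp.1.1⟩, fun h => hp.2 h.symm⟩
    · intro p _
      rfl
  rw [hsum1] at hsum0
  exact one_ne_zero hsum0
end

section
/- Let k ≥ 1, N = 4k, and let d ≥ 2 be even. Then there exist a nonzero exponent vector α : {1,…,N} → {0,…,d−1} and a subset Q ⊆ {1,…,N} with |Q| = 2k such that the partial trace over Q of the stabilizer element ∏_{i=1}^{N} g_i^{α_i} is nonzero. -/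
set_option maxHeartbeats 1000000


/-- The primitive `d`-th root of unity `ω = exp(2πi/d)`. -/
noncomputable def omg (d : ℕ) : ℂ := Complex.exp (2 * Real.pi * Complex.I / d)

/-- The `d × d` cyclic shift matrix `X = ∑_j |j+1 mod d⟩⟨j|`. -/
def Xmat (d : ℕ) : Matrix (Fin d) (Fin d) ℂ :=
  Matrix.of fun l m => if (l : ℕ) = ((m : ℕ) + 1) % d then 1 else 0

/-- The `d × d` clock matrix `Z = diag(1, ω, ω², …, ω^{d−1})`. -/
noncomputable def Zmat (d : ℕ) : Matrix (Fin d) (Fin d) ℂ :=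
  Matrix.diagonal fun j => omg d ^ (j : ℕ)

/-- The `N`-qudit operator acting as the `d × d` matrix `M` on the `i`-th tensor factor
and as the identity on all other factors. -/
noncomputable def siteOp (d N : ℕ) (M : Matrix (Fin d) (Fin d) ℂ) (i : Fin N) :
    Matrix (Fin N → Fin d) (Fin N → Fin d) ℂ :=
  Matrix.of fun f f' =>
    M (f i) (f' i) * ∏ l ∈ Finset.univ.erase i, (if f l = f' l then (1 : ℂ) else 0)

/-- The graph-state stabilizer generator `g_i = X_i ∏_j Z_j^{Γ_{ij}}`. -/
noncomputable def gGen (d N : ℕ) (Γ : Matrix (Fin N) (Fin N) ℕ) (i : Fin N) :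
    Matrix (Fin N → Fin d) (Fin N → Fin d) ℂ :=
  siteOp d N (Xmat d) i *
    ((List.finRange N).map fun j => siteOp d N (Zmat d ^ Γ i j) j).prod

/-- The stabilizer element `∏_{i=1}^{N} g_i^{α_i}` for an exponent vector
`α : {1,…,N} → {0,…,d−1}`. -/
noncomputable def stabElem (d N : ℕ) (Γ : Matrix (Fin N) (Fin N) ℕ) (α : Fin N → Fin d) :
    Matrix (Fin N → Fin d) (Fin N → Fin d) ℂ :=
  ((List.finRange N).map fun i => gGen d N Γ i ^ (α i : ℕ)).prod

/-- The function on `{1,…,N}` equal to `f` on `Qᶜ` and to `h` on `Q`. -/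
def glue {d N : ℕ} (Q : Finset (Fin N)) (f : {x : Fin N // x ∉ Q} → Fin d)
    (h : {x : Fin N // x ∈ Q} → Fin d) : Fin N → Fin d :=
  fun x => if hx : x ∈ Q then h ⟨x, hx⟩ else f ⟨x, hx⟩

/-- The partial trace over the qudits in `Q` of an `N`-qudit operator `M`:
`(Tr_Q M)(f, f') = ∑_{h : Q → {0,…,d−1}} M(f ⊔ h, f' ⊔ h)`. -/
noncomputable def ptrace {d N : ℕ} (Q : Finset (Fin N))
    (M : Matrix (Fin N → Fin d) (Fin N → Fin d) ℂ) :
    Matrix ({x : Fin N // x ∉ Q} → Fin d) ({x : Fin N // x ∉ Q} → Fin d) ℂ :=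
  Matrix.of fun f f' => ∑ h : {x : Fin N // x ∈ Q} → Fin d, M (glue Q f h) (glue Q f' h)

open Finset

section Phys

variable {d N : ℕ}

open Fin.NatCast

/-- exponent sum `∑_j f(j)·Γ(i,j)` -/
def Snat (Γ : Matrix (Fin N) (Fin N) ℕ) (i : Fin N) (f : Fin N → Fin d) : ℕ :=
  ∑ j, (f j : ℕ) * Γ i j

/-- pointwise sum in `Fin d` -/
def padd (f g : Fin N → Fin d) : Fin N → Fin d := fun l => f l + g l

/-- the function supported at `i` with value `c` -/
def fsingle [NeZero d] (i : Fin N) (c : Fin d) : Fin N → Fin d :=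
  fun l => if l = i then c else 0

lemma omg_ne_zero (d : ℕ) : omg d ≠ 0 := Complex.exp_ne_zero _

lemma omg_pow_d (hd : d ≠ 0) : omg d ^ d = 1 := by
  rw [omg, ← Complex.exp_nat_mul]
  have : (d : ℂ) ≠ 0 := Nat.cast_ne_zero.mpr hd
  rw [show (d : ℂ) * (2 * Real.pi * Complex.I / d) = 2 * Real.pi * Complex.I by
    field_simp]
  exact Complex.exp_two_pi_mul_I

lemma omg_pow_mod (hd : d ≠ 0) (a : ℕ) : omg d ^ (a % d) = omg d ^ a := by
  conv_rhs => rw [← Nat.div_add_mod a d]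
  rw [pow_add, pow_mul, omg_pow_d hd, one_pow, one_mul]

lemma omg_pow_congr (hd : d ≠ 0) {a b : ℕ} (h : (a : ZMod d) = (b : ZMod d)) :
    omg d ^ a = omg d ^ b := by
  have : a % d = b % d := by
    rwa [ZMod.natCast_eq_natCast_iff] at h
  rw [← omg_pow_mod hd a, ← omg_pow_mod hd b, this]

lemma siteOp_diagonal (w : Fin d → ℂ) (j : Fin N) :
    siteOp d N (Matrix.diagonal w) j = Matrix.diagonal (fun f => w (f j)) := by
  ext f f'
  rw [siteOp, Matrix.of_apply]
  by_cases h : f = f'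
  · subst h
    rw [Matrix.diagonal_apply_eq, Matrix.diagonal_apply_eq]
    have hone : ∀ l ∈ Finset.univ.erase j, (if f l = f l then (1:ℂ) else 0) = 1 := by
      intro l _; rw [if_pos rfl]
    rw [Finset.prod_congr rfl hone, Finset.prod_const_one, mul_one]
  · rw [Matrix.diagonal_apply_ne _ h]
    obtain ⟨l, hl⟩ : ∃ l, f l ≠ f' l := by
      by_contra hc; push_neg at hc; exact h (funext hc)
    by_cases hlj : l = j
    · subst hlj
      rw [Matrix.diagonal_apply_ne _ hl, zero_mul]
    · rw [Finset.prod_eq_zero (Finset.mem_erase.mpr ⟨hlj, Finset.mem_univ l⟩)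
        (if_neg hl : (if f l = f' l then (1:ℂ) else 0) = 0), mul_zero]

lemma list_prod_diagonal {ι : Type*} (L : List ι) (w : ι → (Fin N → Fin d) → ℂ) :
    (L.map fun j => Matrix.diagonal (w j)).prod
      = Matrix.diagonal (fun f => (L.map fun j => w j f).prod) := by
  induction L with
  | nil => simp [Matrix.diagonal_one]
  | cons i L ih =>
      rw [List.map_cons, List.prod_cons, ih, Matrix.diagonal_mul_diagonal]
      refine congrArg Matrix.diagonal (funext fun f => ?_)
      rw [List.map_cons, List.prod_cons]

lemma zpart_eq (Γ : Matrix (Fin N) (Fin N) ℕ) (i : Fin N) :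
    ((List.finRange N).map fun j => siteOp d N (Zmat d ^ Γ i j) j).prod
      = Matrix.diagonal (fun f => omg d ^ Snat Γ i f) := by
  have h1 : ∀ j : Fin N, siteOp d N (Zmat d ^ Γ i j) j
      = Matrix.diagonal (fun f => omg d ^ ((f j : ℕ) * Γ i j)) := by
    intro j
    rw [Zmat, Matrix.diagonal_pow, siteOp_diagonal]
    refine congrArg Matrix.diagonal (funext fun f => ?_)
    rw [Pi.pow_apply, ← pow_mul]
  rw [show ((List.finRange N).map fun j => siteOp d N (Zmat d ^ Γ i j) j)
      = (List.finRange N).map fun j => Matrix.diagonal (fun f => omg d ^ ((f j : ℕ) * Γ i j)) by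
    apply List.map_congr_left; intro j _; exact h1 j]
  rw [list_prod_diagonal]
  refine congrArg Matrix.diagonal (funext fun f => ?_)
  rw [show Snat Γ i f = ∑ j, (f j : ℕ) * Γ i j from rfl, ← Finset.prod_pow_eq_pow_sum,
    Fin.prod_univ_def]

lemma xmat_apply [NeZero d] (hd : 2 ≤ d) (x y : Fin d) :
    Xmat d x y = if x = y + 1 then 1 else 0 := by
  rw [Xmat, Matrix.of_apply]
  have hiff : ((x:ℕ) = ((y:ℕ) + 1) % d) ↔ x = y + 1 := by
    rw [Fin.ext_iff, Fin.val_add, Fin.val_one', Nat.mod_eq_of_lt (show 1 < d by omega)]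
  simp only [hiff]

lemma gGen_apply [NeZero d] (hd : 2 ≤ d) (Γ : Matrix (Fin N) (Fin N) ℕ) (i : Fin N)
    (f f' : Fin N → Fin d) :
    gGen d N Γ i f f' = if f = padd f' (fsingle i 1) then omg d ^ Snat Γ i f' else 0 := by
  rw [gGen, zpart_eq, Matrix.mul_diagonal, siteOp, Matrix.of_apply, xmat_apply hd]
  by_cases h : f = padd f' (fsingle i 1)
  · rw [if_pos h]
    subst h
    have h1 : padd f' (fsingle i 1) i = f' i + 1 := by
      simp [padd, fsingle]
    have hone : ∀ l ∈ Finset.univ.erase i,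
        (if padd f' (fsingle i 1) l = f' l then (1:ℂ) else 0) = 1 := by
      intro l hl
      simp [padd, fsingle, if_neg (Finset.mem_erase.mp hl).1]
    rw [Finset.prod_congr rfl hone, Finset.prod_const_one, mul_one, h1]
    simp
  · rw [if_neg h]
    by_cases h2 : f i = f' i + 1
    · obtain ⟨l, hl⟩ : ∃ l, f l ≠ padd f' (fsingle i 1) l := by
        by_contra hc; push_neg at hc; exact h (funext hc)
      have hli : l ≠ i := by
        intro hc; subst hc
        apply hl
        simp only [padd, fsingle, if_pos rfl]
        exact h2
      have hl' : f l ≠ f' l := by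
        intro hc; apply hl
        simp only [padd, fsingle, if_neg hli, add_zero]; exact hc
      rw [Finset.prod_eq_zero (Finset.mem_erase.mpr ⟨hli, Finset.mem_univ l⟩)
        (if_neg hl' : (if f l = f' l then (1:ℂ) else 0) = 0), mul_zero, zero_mul]
    · simp only [if_neg h2, zero_mul]

lemma snat_padd_fsingle [NeZero d] (Γ : Matrix (Fin N) (Fin N) ℕ) (i : Fin N)
    (hΓ : Γ i i = 0) (f : Fin N → Fin d) (c : Fin d) :
    Snat Γ i (padd f (fsingle i c)) = Snat Γ i f := by
  refine Finset.sum_congr rfl fun j _ => ?_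
  by_cases hj : j = i
  · subst hj; rw [hΓ, mul_zero, mul_zero]
  · simp only [padd, fsingle, if_neg hj, add_zero]

lemma gpow_apply [NeZero d] (hd : 2 ≤ d) (Γ : Matrix (Fin N) (Fin N) ℕ) (i : Fin N)
    (hΓ : Γ i i = 0) (m : ℕ) (f f' : Fin N → Fin d) :
    (gGen d N Γ i ^ m) f f' =
      if f = padd f' (fsingle i (m : Fin d)) then omg d ^ (m * Snat Γ i f') else 0 := by
  induction m generalizing f f' with
  | zero =>
      rw [pow_zero, Matrix.one_apply]
      have hz : padd f' (fsingle i ((0 : ℕ) : Fin d)) = f' := by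
        funext l
        simp only [padd, fsingle, Nat.cast_zero]
        by_cases hl : l = i <;> simp [hl]
      rw [hz, Nat.zero_mul, pow_zero]
  | succ m ih =>
      rw [pow_succ, Matrix.mul_apply]
      have hterm : ∀ h : Fin N → Fin d,
          (gGen d N Γ i ^ m) f h * gGen d N Γ i h f' =
          if h = padd f' (fsingle i 1) then (gGen d N Γ i ^ m) f h * omg d ^ Snat Γ i f'
          else 0 := by
        intro h
        rw [gGen_apply hd]
        by_cases hh : h = padd f' (fsingle i 1)
        · rw [if_pos hh, if_pos hh]
        · rw [if_neg hh, if_neg hh, mul_zero]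
      rw [Finset.sum_congr rfl (fun h _ => hterm h), Finset.sum_ite_eq' Finset.univ,
        if_pos (Finset.mem_univ _), ih]
      have hpadd : padd (padd f' (fsingle i 1)) (fsingle i (m : Fin d))
          = padd f' (fsingle i (((m+1) : ℕ) : Fin d)) := by
        funext l
        simp only [padd, fsingle]
        by_cases hl : l = i
        · subst hl
          simp only [if_pos rfl]
          push_cast
          abel
        · simp only [hl, ite_false, add_zero]
      rw [snat_padd_fsingle Γ i hΓ, hpadd]
      by_cases hf : f = padd f' (fsingle i (((m+1) : ℕ) : Fin d))
      · rw [if_pos hf, if_pos hf, ← pow_add]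
        congr 1
        ring
      · rw [if_neg hf, if_neg hf, zero_mul]

def offL [NeZero d] (α : Fin N → Fin d) : List (Fin N) → Fin N → Fin d
  | [] => fun _ => 0
  | i :: L => padd (offL α L) (fsingle i (α i))

def cL [NeZero d] (Γ : Matrix (Fin N) (Fin N) ℕ) (α : Fin N → Fin d) :
    List (Fin N) → (Fin N → Fin d) → ℕ
  | [], _ => 0
  | i :: L, f => (α i : ℕ) * Snat Γ i (padd f (offL α L)) + cL Γ α L f

def wsum (Γ : Matrix (Fin N) (Fin N) ℕ) (α : Fin N → Fin d) (L : List (Fin N))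
    (j : Fin N) : ℕ :=
  (L.map fun i => (α i : ℕ) * Γ i j).sum

lemma listprod_apply [NeZero d] (hd : 2 ≤ d) (Γ : Matrix (Fin N) (Fin N) ℕ)
    (hΓ : ∀ i, Γ i i = 0) (α : Fin N → Fin d) (L : List (Fin N)) (f f' : Fin N → Fin d) :
    ((L.map fun i => gGen d N Γ i ^ (α i : ℕ)).prod) f f' =
      if f = padd f' (offL α L) then omg d ^ cL Γ α L f' else 0 := by
  induction L generalizing f f' with
  | nil =>
      rw [List.map_nil, List.prod_nil, Matrix.one_apply]
      have hz : padd f' (offL α []) = f' := by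
        funext l; simp [padd, offL]
      rw [hz, show cL Γ α [] f' = 0 from rfl, pow_zero]
  | cons i L ih =>
      rw [List.map_cons, List.prod_cons, Matrix.mul_apply]
      have hterm : ∀ h : Fin N → Fin d,
          (gGen d N Γ i ^ (α i : ℕ)) f h *
            ((L.map fun i => gGen d N Γ i ^ (α i : ℕ)).prod) h f'
          = if h = padd f' (offL α L)
            then (gGen d N Γ i ^ (α i : ℕ)) f h * omg d ^ cL Γ α L f' else 0 := by
        intro h
        rw [ih]
        by_cases hh : h = padd f' (offL α L)
        · rw [if_pos hh, if_pos hh]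
        · rw [if_neg hh, if_neg hh, mul_zero]
      rw [Finset.sum_congr rfl (fun h _ => hterm h), Finset.sum_ite_eq' Finset.univ,
        if_pos (Finset.mem_univ _), gpow_apply hd Γ i (hΓ i), Fin.cast_val_eq_self (α i)]
      have hpadd : padd (padd f' (offL α L)) (fsingle i (α i)) = padd f' (offL α (i :: L)) := by
        funext l
        simp only [padd, offL]
        rw [add_assoc]
      rw [hpadd, ite_mul, zero_mul, ← pow_add]
      rfl

lemma offL_notmem [NeZero d] (α : Fin N → Fin d) (L : List (Fin N)) (l : Fin N)
    (h : l ∉ L) : offL α L l = 0 := by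
  induction L with
  | nil => rfl
  | cons i L ih =>
      rw [List.mem_cons] at h
      push_neg at h
      simp only [offL, padd, fsingle]
      rw [ih h.2, if_neg h.1, add_zero]

lemma offL_finRange [NeZero d] (α : Fin N → Fin d) : offL α (List.finRange N) = α := by
  funext l
  have : ∀ L : List (Fin N), L.Nodup → l ∈ L → offL α L l = α l := by
    intro L
    induction L with
    | nil => intro _ h; cases h
    | cons i L ih =>
        intro hnd hl
        have hnd' := List.nodup_cons.mp hnd
        simp only [offL, padd, fsingle]
        rcases List.mem_cons.mp hl with h1 | h1
        · subst h1
          rw [offL_notmem α L l hnd'.1, if_pos rfl, zero_add]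
        · have hli : l ≠ i := by rintro rfl; exact hnd'.1 h1
          rw [ih hnd'.2 h1, if_neg hli, add_zero]
  exact this _ (List.nodup_finRange N) (List.mem_finRange l)

lemma stab_apply [NeZero d] (hd : 2 ≤ d) (Γ : Matrix (Fin N) (Fin N) ℕ)
    (hΓ : ∀ i, Γ i i = 0) (α : Fin N → Fin d) (f f' : Fin N → Fin d) :
    stabElem d N Γ α f f' =
      if f = padd f' α then omg d ^ cL Γ α (List.finRange N) f' else 0 := by
  rw [stabElem, listprod_apply hd Γ hΓ, offL_finRange]

lemma snat_cast (Γ : Matrix (Fin N) (Fin N) ℕ) (i : Fin N) (f : Fin N → Fin d) :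
    ((Snat Γ i f : ℕ) : ZMod d) = ∑ j, ((f j : ℕ) : ZMod d) * ((Γ i j : ℕ) : ZMod d) := by
  rw [show Snat Γ i f = ∑ j, (f j : ℕ) * Γ i j from rfl]
  push_cast
  rfl

lemma val_add_cast [NeZero d] (a b : Fin d) :
    (((a + b : Fin d) : ℕ) : ZMod d) = ((a : ℕ) : ZMod d) + ((b : ℕ) : ZMod d) := by
  rw [Fin.val_add, ZMod.natCast_mod]
  push_cast
  rfl

lemma snat_padd_cast [NeZero d] (Γ : Matrix (Fin N) (Fin N) ℕ) (i : Fin N)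
    (f g : Fin N → Fin d) :
    ((Snat Γ i (padd f g) : ℕ) : ZMod d)
      = ((Snat Γ i f : ℕ) : ZMod d) + ((Snat Γ i g : ℕ) : ZMod d) := by
  rw [snat_cast, snat_cast, snat_cast, ← Finset.sum_add_distrib]
  refine Finset.sum_congr rfl fun j _ => ?_
  rw [show padd f g j = f j + g j from rfl, val_add_cast, add_mul]

lemma cL_affine [NeZero d] (Γ : Matrix (Fin N) (Fin N) ℕ) (α : Fin N → Fin d)
    (L : List (Fin N)) :
    ∃ K : ZMod d, ∀ f : Fin N → Fin d, ((cL Γ α L f : ℕ) : ZMod d)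
      = K + ∑ j, ((wsum Γ α L j : ℕ) : ZMod d) * ((f j : ℕ) : ZMod d) := by
  induction L with
  | nil =>
      refine ⟨0, fun f => ?_⟩
      simp [cL, wsum]
  | cons i L ih =>
      obtain ⟨K, hK⟩ := ih
      refine ⟨K + ((α i : ℕ) : ZMod d) * ((Snat Γ i (offL α L) : ℕ) : ZMod d), fun f => ?_⟩
      have hw : ∀ j, ((wsum Γ α (i :: L) j : ℕ) : ZMod d)
          = ((α i : ℕ) : ZMod d) * ((Γ i j : ℕ) : ZMod d) + ((wsum Γ α L j : ℕ) : ZMod d) := by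
        intro j
        rw [show wsum Γ α (i :: L) j = (α i : ℕ) * Γ i j + wsum Γ α L j from rfl]
        push_cast
        ring
      have hsum : ∑ j, ((wsum Γ α (i :: L) j : ℕ) : ZMod d) * ((f j : ℕ) : ZMod d)
          = ((α i : ℕ) : ZMod d) * ((Snat Γ i f : ℕ) : ZMod d)
            + ∑ j, ((wsum Γ α L j : ℕ) : ZMod d) * ((f j : ℕ) : ZMod d) := by
        rw [snat_cast, Finset.mul_sum, ← Finset.sum_add_distrib]
        refine Finset.sum_congr rfl fun j _ => ?_
        rw [hw j]
        ring
      rw [show cL Γ α (i :: L) f = (α i : ℕ) * Snat Γ i (padd f (offL α L)) + cL Γ α L f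
        from rfl, Nat.cast_add, Nat.cast_mul, snat_padd_cast, hK, hsum]
      ring

lemma wsum_finRange (Γ : Matrix (Fin N) (Fin N) ℕ) (α : Fin N → Fin d) (j : Fin N) :
    wsum Γ α (List.finRange N) j = ∑ i, (α i : ℕ) * Γ i j :=
  (Fin.sum_univ_def _).symm

end Phys

open Finset

private lemma zmod2_eq_one_of_ne_zero {x : ZMod 2} (h : x ≠ 0) : x = 1 := by
  revert x; decide

private lemma zmod2_eq_zero_of_ne_one {x : ZMod 2} (h : x ≠ 1) : x = 0 := by
  revert x; decide

private lemma det_eq_card_mod_two {m : ℕ} (M : Matrix (Fin m) (Fin m) (ZMod 2)) :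
    M.det = (((univ : Finset (Equiv.Perm (Fin m))).filter
      (fun π => ∀ b, M (π b) b = 1)).card : ZMod 2) := by
  classical
  rw [Matrix.det_apply]
  have h1 : ∀ σ : Equiv.Perm (Fin m),
      Equiv.Perm.sign σ • (∏ i, M (σ i) i) = if (∀ b, M (σ b) b = 1) then 1 else 0 := by
    intro σ
    have hs : Equiv.Perm.sign σ • (∏ i, M (σ i) i) = ∏ i, M (σ i) i := by
      rcases Int.units_eq_one_or (Equiv.Perm.sign σ) with h | h <;> rw [h]
      · exact one_smul _ _
      · rw [Units.smul_def, Units.val_neg, Units.val_one, neg_smul, one_smul, CharTwo.neg_eq]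
    rw [hs]
    by_cases hall : ∀ b, M (σ b) b = 1
    · rw [if_pos hall]; exact Finset.prod_eq_one (fun i _ => hall i)
    · rw [if_neg hall]
      push_neg at hall
      obtain ⟨b, hb⟩ := hall
      exact Finset.prod_eq_zero (mem_univ b) (zmod2_eq_zero_of_ne_one hb)
  rw [Finset.sum_congr rfl (fun σ _ => h1 σ), Finset.sum_boole]
open Finset

private def mkPerm {n m : ℕ} (Q : Finset (Fin n)) (hQ : Q.card = m) (hB : Qᶜ.card = m)
    (σ : Fin n → Fin n) (hinv : ∀ i, σ (σ i) = i) (htr : ∀ i, i ∈ Q ↔ σ i ∉ Q) :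
    Equiv.Perm (Fin m) where
  toFun b := (Q.orderIsoOfFin hQ).symm ⟨σ ((Qᶜ).orderIsoOfFin hB b), by
    have h1 : ((((Qᶜ).orderIsoOfFin hB b) : Fin n)) ∉ Q :=
      Finset.mem_compl.mp ((Qᶜ).orderIsoOfFin hB b).2
    by_contra hc
    exact h1 ((htr _).mpr hc)⟩
  invFun a := (Qᶜ).orderIsoOfFin hB |>.symm ⟨σ ((Q.orderIsoOfFin hQ) a),
    Finset.mem_compl.mpr ((htr _).mp ((Q.orderIsoOfFin hQ) a).2)⟩
  left_inv b := by
    simp only [OrderIso.apply_symm_apply, hinv, Subtype.coe_eta, OrderIso.symm_apply_apply]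
  right_inv a := by
    simp only [OrderIso.apply_symm_apply, hinv, Subtype.coe_eta, OrderIso.symm_apply_apply]

private lemma sigma_card {n m : ℕ} (A : Matrix (Fin n) (Fin n) (ZMod 2))
    (hA : ∀ i j, A i j = A j i)
    (Q : Finset (Fin n)) (hQ : Q.card = m) (hB : Qᶜ.card = m) :
    ((univ : Finset (Fin n → Fin n)).filter (fun σ =>
        (∀ i, σ (σ i) = i) ∧ (∀ i, A i (σ i) = 1) ∧ (∀ i, i ∈ Q ↔ σ i ∉ Q))).card =
    ((univ : Finset (Equiv.Perm (Fin m))).filter (fun π => ∀ b,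
        (Matrix.of fun a b : Fin m =>
          A ((Q.orderIsoOfFin hQ a : Fin n)) (((Qᶜ).orderIsoOfFin hB b : Fin n))) (π b) b = 1)).card := by
  classical
  set eQ := Q.orderIsoOfFin hQ with heQ
  set eB := (Qᶜ).orderIsoOfFin hB with heB
  refine Finset.card_bij'
    (fun σ hσ => mkPerm Q hQ hB σ (by simp only [mem_filter] at hσ; exact hσ.2.1)
        (by simp only [mem_filter] at hσ; exact hσ.2.2.2))
    (fun π _ => fun i => if h : i ∈ Q then (eB (π.symm (eQ.symm ⟨i, h⟩)) : Fin n)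
      else (eQ (π (eB.symm ⟨i, Finset.mem_compl.mpr h⟩)) : Fin n)) ?_ ?_ ?_ ?_
  · -- forward membership
    intro σ hσ
    simp only [mem_filter] at hσ ⊢
    obtain ⟨-, hinv, hedge, htr⟩ := hσ
    refine ⟨mem_univ _, fun b => ?_⟩
    show A ((eQ (mkPerm Q hQ hB σ hinv htr b) : Fin n)) (eB b) = 1
    have : ((eQ (mkPerm Q hQ hB σ hinv htr b)) : Fin n) = σ (eB b) := by
      simp only [mkPerm, Equiv.coe_fn_mk, heQ, heB, OrderIso.apply_symm_apply]
    rw [this, hA]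
    exact hedge _
  · -- backward membership
    intro π hπ
    rw [Finset.mem_filter] at hπ ⊢
    simp only [mem_filter, Matrix.of_apply] at hπ ⊢
    obtain ⟨-, hgood⟩ := hπ
    refine ⟨mem_univ _, ?_, ?_, ?_⟩
    · intro i
      by_cases h : i ∈ Q
      · have h2 : ((eB (π.symm (eQ.symm ⟨i, h⟩))) : Fin n) ∉ Q :=
          Finset.mem_compl.mp (eB (π.symm (eQ.symm ⟨i, h⟩))).2
        simp [dif_pos h, dif_neg h2, Subtype.coe_eta, OrderIso.symm_apply_apply,
          Equiv.apply_symm_apply]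
      · have h2 : ((eQ (π (eB.symm ⟨i, Finset.mem_compl.mpr h⟩))) : Fin n) ∈ Q :=
          (eQ (π (eB.symm ⟨i, Finset.mem_compl.mpr h⟩))).2
        simp [dif_neg h, dif_pos h2, Subtype.coe_eta, OrderIso.symm_apply_apply,
          Equiv.symm_apply_apply]
    · intro i
      by_cases h : i ∈ Q
      · have h3 := hgood (π.symm (eQ.symm ⟨i, h⟩))
        rw [Equiv.apply_symm_apply] at h3
        simp only [dif_pos h]
        simpa using h3
      · have h3 := hgood (eB.symm ⟨i, Finset.mem_compl.mpr h⟩)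
        rw [hA] at h3
        simp only [dif_neg h]
        simpa using h3
    · intro i
      by_cases h : i ∈ Q
      · simp only [dif_pos h, h, true_iff]
        exact Finset.mem_compl.mp (eB (π.symm (eQ.symm ⟨i, h⟩))).2
      · simp only [dif_neg h, h, false_iff, not_not]
        exact (eQ (π (eB.symm ⟨i, Finset.mem_compl.mpr h⟩))).2
  · -- left inverse
    intro σ hσ
    simp only [mem_filter] at hσ
    obtain ⟨-, hinv, hedge, htr⟩ := hσ
    funext x
    by_cases h : x ∈ Q
    · simp only [dif_pos h]
      show (eB ((mkPerm Q hQ hB σ hinv htr).symm (eQ.symm ⟨x, h⟩)) : Fin n) = σ x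
      simp only [mkPerm, Equiv.coe_fn_symm_mk, heQ, heB, OrderIso.apply_symm_apply, Subtype.coe_eta]
    · simp only [dif_neg h]
      show (eQ ((mkPerm Q hQ hB σ hinv htr) (eB.symm ⟨x, Finset.mem_compl.mpr h⟩)) : Fin n) = σ x
      simp only [mkPerm, Equiv.coe_fn_mk, heQ, heB, OrderIso.apply_symm_apply, Subtype.coe_eta]
  · -- right inverse
    intro π hπ
    refine Equiv.ext fun b => ?_
    simp only [mkPerm, Equiv.coe_fn_mk]
    rw [OrderIso.symm_apply_eq]
    refine Subtype.ext ?_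
    have h2 : ((eB b : Fin n)) ∉ Q := Finset.mem_compl.mp (eB b).2
    dsimp only
    rw [dif_neg h2]
    simp only [Subtype.coe_eta, heQ, heB, OrderIso.symm_apply_apply]

private lemma exists_block_det_zero (k : ℕ) (hk : 1 ≤ k)
    (A : Matrix (Fin (4*k)) (Fin (4*k)) (ZMod 2)) (hA : ∀ i j, A i j = A j i) :
    ∃ (Q : Finset (Fin (4*k))) (hQ : Q.card = 2*k) (hB : Qᶜ.card = 2*k),
      (Matrix.of fun a b : Fin (2*k) =>
        A ((Q.orderIsoOfFin hQ a : Fin (4*k))) (((Qᶜ).orderIsoOfFin hB b : Fin (4*k)))).det = 0 := by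
  classical
  by_contra hcon
  push_neg at hcon
  have hcardn : Fintype.card (Fin (4*k)) = 4*k := Fintype.card_fin _
  -- the set T
  have hTbound : ∀ m ∈ Finset.range (2*k-1), m < 4*k := by
    intro m hm; rw [Finset.mem_range] at hm; omega
  set T : Finset (Fin (4*k)) := (Finset.range (2*k-1)).attachFin hTbound with hT
  have hTcard : T.card = 2*k-1 := by rw [hT, Finset.card_attachFin, Finset.card_range]
  have hTccard : Tᶜ.card = 2*k+1 := by rw [Finset.card_compl, hcardn, hTcard]; omega
  -- pairs
  set cond : Finset (Fin (4*k)) × (Fin (4*k) → Fin (4*k)) → Prop := fun p =>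
    T ⊆ p.1 ∧ p.1.card = 2*k ∧ (∀ i, p.2 (p.2 i) = i) ∧ (∀ i, A i (p.2 i) = 1) ∧
      (∀ i, i ∈ p.1 ↔ p.2 i ∉ p.1) with hcond
  set S : Finset (Finset (Fin (4*k)) × (Fin (4*k) → Fin (4*k))) := univ.filter cond with hS
  set Qfam : Finset (Finset (Fin (4*k))) := univ.filter (fun Q => T ⊆ Q ∧ Q.card = 2*k)
    with hQfam
  -- Qfam has odd cardinality
  have hQfamcard : Qfam.card = 2*k+1 := by
    have himg : Qfam = Tᶜ.image (fun x => insert x T) := by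
      ext Q
      simp only [hQfam, mem_filter, mem_univ, true_and, Finset.mem_image, Finset.mem_compl]
      constructor
      · rintro ⟨hTQ, hQc⟩
        have hsd : (Q \ T).card = 1 := by
          rw [Finset.card_sdiff_of_subset hTQ, hQc, hTcard]; omega
        obtain ⟨x, hx⟩ := Finset.card_eq_one.mp hsd
        have hxmem : x ∈ Q \ T := hx ▸ Finset.mem_singleton_self x
        refine ⟨x, (Finset.mem_sdiff.mp hxmem).2, ?_⟩
        have hun : T ∪ Q \ T = Q := Finset.union_sdiff_of_subset hTQ
        rw [hx] at hun
        rw [← hun, Finset.insert_eq, Finset.union_comm]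
      · rintro ⟨x, hxT, rfl⟩
        refine ⟨Finset.subset_insert _ _, ?_⟩
        rw [Finset.card_insert_of_notMem hxT, hTcard]; omega
    rw [himg, Finset.card_image_of_injOn, hTccard]
    intro x hx y hy hxy
    simp only [Finset.coe_compl, Set.mem_compl_iff, Finset.mem_coe] at hx hy
    have hxy' : insert x T = insert y T := hxy
    have : x ∈ insert y T := by rw [← hxy']; exact Finset.mem_insert_self x T
    rcases Finset.mem_insert.mp this with h | h
    · exact h
    · exact absurd h hx
  -- the involution data
  set pivot : (Fin (4*k) → Fin (4*k)) → Fin (4*k) := fun σ =>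
    if h : (univ.filter (fun i => i ∉ T ∧ σ i ∉ T)).Nonempty
    then (univ.filter (fun i => i ∉ T ∧ σ i ∉ T)).min' h else ⟨0, by omega⟩ with hpivot
  set flip : Finset (Fin (4*k)) × (Fin (4*k) → Fin (4*k)) →
      Finset (Fin (4*k)) × (Fin (4*k) → Fin (4*k)) := fun p =>
    (if pivot p.2 ∈ p.1 then insert (p.2 (pivot p.2)) (p.1.erase (pivot p.2))
     else insert (pivot p.2) (p.1.erase (p.2 (pivot p.2))), p.2) with hflip
  -- basic facts about elements of S
  have hfacts : ∀ p ∈ S, pivot p.2 ∉ T ∧ p.2 (pivot p.2) ∉ T ∧ pivot p.2 ≠ p.2 (pivot p.2) := by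
    intro p hp
    rw [hS, mem_filter] at hp
    obtain ⟨-, hsub, hcard, hinv, hedge, htr⟩ := hp
    have hinj : Function.Injective p.2 := by
      intro a b hab
      have : p.2 (p.2 a) = p.2 (p.2 b) := by rw [hab]
      rwa [hinv, hinv] at this
    have hWne : (univ.filter (fun i => i ∉ T ∧ p.2 i ∉ T)).Nonempty := by
      by_contra hempty
      rw [Finset.not_nonempty_iff_eq_empty] at hempty
      have hall : ∀ i, i ∉ T → p.2 i ∈ T := by
        intro i hi
        by_contra hc
        have : i ∈ (univ.filter (fun i => i ∉ T ∧ p.2 i ∉ T)) := by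
          rw [mem_filter]; exact ⟨mem_univ _, hi, hc⟩
        rw [hempty] at this
        exact absurd this (Finset.notMem_empty i)
      have hle : Tᶜ.card ≤ T.card := by
        apply Finset.card_le_card_of_injOn p.2
        · intro a ha; exact hall a (Finset.mem_compl.mp ha)
        · intro a _ b _ hab; exact hinj hab
      rw [hTccard, hTcard] at hle; omega
    have hmem := Finset.min'_mem _ hWne
    rw [mem_filter] at hmem
    have hpv : pivot p.2 = (univ.filter (fun i => i ∉ T ∧ p.2 i ∉ T)).min' hWne := by
      rw [hpivot]; dsimp only; rw [dif_pos hWne]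
    refine ⟨by rw [hpv]; exact hmem.2.1, by rw [hpv]; exact hmem.2.2, ?_⟩
    intro hc
    have := htr (pivot p.2)
    rw [← hc] at this
    tauto
  -- membership characterization of flip
  have hmemflip : ∀ p ∈ S, ∀ x, (x ∈ (flip p).1 ↔
      (if x = pivot p.2 ∨ x = p.2 (pivot p.2) then x ∉ p.1 else x ∈ p.1)) := by
    intro p hp x
    obtain ⟨-, -, hne⟩ := hfacts p hp
    rw [hS, mem_filter] at hp
    obtain ⟨-, hsub, hcard, hinv, hedge, htr⟩ := hp
    have htr0 := htr (pivot p.2)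
    rw [hflip]
    dsimp only
    by_cases hq : pivot p.2 ∈ p.1
    · rw [if_pos hq]
      have hq2 : p.2 (pivot p.2) ∉ p.1 := (htr _).mp hq
      simp only [Finset.mem_insert, Finset.mem_erase]
      by_cases h1 : x = pivot p.2
      · subst h1; simp only [true_or, if_pos]; tauto
      · by_cases h2 : x = p.2 (pivot p.2)
        · subst h2; simp only [or_true, if_pos]; tauto
        · simp only [h1, h2, or_self, if_neg, not_false_iff]; tauto
    · rw [if_neg hq]
      have hq2 : p.2 (pivot p.2) ∈ p.1 := by
        by_contra hc; exact hq ((htr _).mpr hc)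
      simp only [Finset.mem_insert, Finset.mem_erase]
      by_cases h1 : x = pivot p.2
      · subst h1; simp only [true_or, if_pos]; tauto
      · by_cases h2 : x = p.2 (pivot p.2)
        · subst h2; simp only [or_true, if_pos]; tauto
        · simp only [h1, h2, or_self, if_neg, not_false_iff]; tauto
  have hflipsnd : ∀ p, (flip p).2 = p.2 := fun p => rfl
  -- flip maps S to S
  have hflipmem : ∀ p ∈ S, flip p ∈ S := by
    intro p hp
    have hmf := hmemflip p hp
    obtain ⟨hp1, hp2, hne⟩ := hfacts p hp
    rw [hS, mem_filter] at hp
    obtain ⟨-, hsub, hcard, hinv, hedge, htr⟩ := hp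
    have hinj : Function.Injective p.2 := by
      intro a b hab
      have : p.2 (p.2 a) = p.2 (p.2 b) := by rw [hab]
      rwa [hinv, hinv] at this
    rw [hS, mem_filter]
    refine ⟨mem_univ _, ?_, ?_, ?_, ?_, ?_⟩
    · -- T ⊆ (flip p).1
      intro x hx
      rw [hmf x]
      have hx1 : x ≠ pivot p.2 := by rintro rfl; exact hp1 hx
      have hx2 : x ≠ p.2 (pivot p.2) := by rintro rfl; exact hp2 hx
      rw [if_neg (by tauto)]
      exact hsub hx
    · -- card
      show (if pivot p.2 ∈ p.1 then insert (p.2 (pivot p.2)) (p.1.erase (pivot p.2))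
        else insert (pivot p.2) (p.1.erase (p.2 (pivot p.2)))).card = 2*k
      by_cases hq : pivot p.2 ∈ p.1
      · rw [if_pos hq]
        have hq2 : p.2 (pivot p.2) ∉ p.1 := (htr _).mp hq
        rw [Finset.card_insert_of_notMem (fun hc => hq2 (Finset.mem_of_mem_erase hc)),
          Finset.card_erase_of_mem hq, hcard]
        omega
      · rw [if_neg hq]
        have hq2 : p.2 (pivot p.2) ∈ p.1 := by by_contra hc; exact hq ((htr _).mpr hc)
        rw [Finset.card_insert_of_notMem (fun hc => hq (Finset.mem_of_mem_erase hc)),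
          Finset.card_erase_of_mem hq2, hcard]
        omega
    · exact hinv
    · exact hedge
    · -- transversal
      intro i
      show i ∈ (flip p).1 ↔ p.2 i ∉ (flip p).1
      rw [hmf i, hmf (p.2 i)]
      by_cases h1 : i = pivot p.2
      · subst h1
        rw [if_pos (Or.inl rfl), if_pos (Or.inr rfl)]
        have := htr (pivot p.2); tauto
      · by_cases h2 : i = p.2 (pivot p.2)
        · subst h2
          have hfix : p.2 (p.2 (pivot p.2)) = pivot p.2 := hinv _
          rw [if_pos (Or.inr rfl), hfix, if_pos (Or.inl rfl)]
          have h4 := htr (p.2 (pivot p.2))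
          rw [hfix] at h4
          tauto
        · rw [if_neg (by tauto)]
          have g1 : p.2 i ≠ pivot p.2 := by
            intro hc; apply h2; rw [← hc, hinv]
          have g2 : p.2 i ≠ p.2 (pivot p.2) := fun hc => h1 (hinj hc)
          rw [if_neg (by tauto)]
          exact htr i
  -- flip is an involution on S
  have hflip2 : ∀ p ∈ S, flip (flip p) = p := by
    intro p hp
    have hmf := hmemflip p hp
    have hmf2 := hmemflip (flip p) (hflipmem p hp)
    simp only [hflipsnd] at hmf2
    refine Prod.ext ?_ rfl
    apply Finset.ext
    intro x
    rw [hmf2 x, hmf x]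
    by_cases h1 : x = pivot p.2 ∨ x = p.2 (pivot p.2)
    · rw [if_pos h1, if_pos h1]
      exact not_not
    · rw [if_neg h1, if_neg h1]
  -- flip has no fixed points on S
  have hflipne : ∀ p ∈ S, flip p ≠ p := by
    intro p hp hc
    have hmf := (hmemflip p hp) (pivot p.2)
    rw [if_pos (Or.inl rfl), hc] at hmf
    tauto
  -- the sum over S is zero
  have hsum0 : ∑ p ∈ S, (1 : ZMod 2) = 0 := by
    refine Finset.sum_involution (fun p _ => flip p) (fun p hp => by decide)
      (fun p hp _ => hflipne p hp) (fun p hp => hflipmem p hp) (fun p hp => hflip2 p hp)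
  have hS0 : (S.card : ZMod 2) = 0 := by
    rw [← hsum0, Finset.sum_const, nsmul_eq_mul, mul_one]
  -- fiberwise decomposition
  have hfiber : S.card = ∑ Q ∈ Qfam, (S.filter (fun p => p.1 = Q)).card := by
    apply Finset.card_eq_sum_card_fiberwise
    intro p hp
    rw [Finset.mem_coe, hS, mem_filter] at hp
    rw [Finset.mem_coe, hQfam, mem_filter]
    exact ⟨mem_univ _, hp.2.1, hp.2.2.1⟩
  -- each fiber has odd cardinality
  have hone : ∀ Q ∈ Qfam, ((S.filter (fun p => p.1 = Q)).card : ZMod 2) = 1 := by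
    intro Q hQmem
    rw [hQfam, mem_filter] at hQmem
    obtain ⟨-, hTQ, hQc⟩ := hQmem
    have hBc : Qᶜ.card = 2*k := by rw [Finset.card_compl, hcardn, hQc]; omega
    have hcards : (S.filter (fun p => p.1 = Q)).card =
        ((univ : Finset (Fin (4*k) → Fin (4*k))).filter (fun σ =>
          (∀ i, σ (σ i) = i) ∧ (∀ i, A i (σ i) = 1) ∧ (∀ i, i ∈ Q ↔ σ i ∉ Q))).card := by
      refine Finset.card_bij' (fun p _ => p.2) (fun σ _ => (Q, σ)) ?_ ?_ ?_ ?_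
      · intro p hp
        rw [Finset.mem_filter] at hp
        obtain ⟨hpS, hPQ⟩ := hp
        rw [hS, Finset.mem_filter] at hpS
        obtain ⟨-, -, -, hinv, hedge, htr⟩ := hpS
        rw [Finset.mem_filter]
        rw [hPQ] at htr
        exact ⟨mem_univ _, hinv, hedge, htr⟩
      · intro σ hσ
        rw [Finset.mem_filter] at hσ ⊢
        obtain ⟨-, hinv, hedge, htr⟩ := hσ
        refine ⟨?_, rfl⟩
        rw [hS, Finset.mem_filter]
        exact ⟨mem_univ _, hTQ, hQc, hinv, hedge, htr⟩
      · intro p hp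
        rw [Finset.mem_filter] at hp
        exact Prod.ext hp.2.symm rfl
      · intro σ hσ; rfl
    rw [hcards, sigma_card A hA Q hQc hBc, ← det_eq_card_mod_two]
    exact zmod2_eq_one_of_ne_zero (hcon Q hQc hBc)
  -- contradiction
  have hcontr : (0 : ZMod 2) = 1 := by
    calc (0 : ZMod 2) = (S.card : ZMod 2) := hS0.symm
      _ = ((∑ Q ∈ Qfam, (S.filter (fun p => p.1 = Q)).card : ℕ) : ZMod 2) := by rw [← hfiber]
      _ = ∑ Q ∈ Qfam, ((S.filter (fun p => p.1 = Q)).card : ZMod 2) := by push_cast; rfl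
      _ = ∑ Q ∈ Qfam, (1 : ZMod 2) := Finset.sum_congr rfl hone
      _ = (Qfam.card : ZMod 2) := by rw [Finset.sum_const, nsmul_eq_mul, mul_one]
      _ = ((2*k+1 : ℕ) : ZMod 2) := by rw [hQfamcard]
      _ = 1 := by push_cast; rw [show ((2:ZMod 2)) = 0 by decide]; ring
  exact absurd hcontr (by decide)

/-- For `N = 4k` and even `d ≥ 2`, there exist a nonzero exponent vector `α` and a
subset `Q` of size `2k` such that the partial trace over `Q` of the stabilizer element
`∏_i g_i^{α_i}` is nonzero. -/
theorem exists_stabElem_ptrace_ne_zero (k d : ℕ) (hk : 1 ≤ k) (hd : 2 ≤ d)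
    (hdeven : Even d) (Γ : Matrix (Fin (4 * k)) (Fin (4 * k)) ℕ)
    (hsymm : Γ.IsSymm) (hdiag : ∀ i, Γ i i = 0) :
    ∃ α : Fin (4 * k) → Fin d, (∃ i, (α i : ℕ) ≠ 0) ∧
      ∃ Q : Finset (Fin (4 * k)), Q.card = 2 * k ∧
        ptrace Q (stabElem d (4 * k) Γ α) ≠ 0 := by
  classical
  haveI : NeZero d := ⟨by omega⟩
  have hsym2 : ∀ x y, Γ x y = Γ y x := fun x y => (congrFun (congrFun hsymm x) y).symm
  set A : Matrix (Fin (4*k)) (Fin (4*k)) (ZMod 2) :=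
    fun i j => ((Γ i j : ℕ) : ZMod 2) with hA
  have hAsym : ∀ i j, A i j = A j i := by
    intro i j
    show ((Γ i j : ℕ) : ZMod 2) = ((Γ j i : ℕ) : ZMod 2)
    rw [hsym2 i j]
  obtain ⟨Q, hQ, hB, hdet⟩ := exists_block_det_zero k hk A hAsym
  obtain ⟨v, hvne, hker⟩ := Matrix.exists_mulVec_eq_zero_iff.mpr hdet
  set eQ := Q.orderIsoOfFin hQ with heQ
  set eB := (Qᶜ).orderIsoOfFin hB with heB
  -- the exponent vector
  set u : Fin (4*k) → ℕ := fun i => if h : i ∈ Qᶜ then (v (eB.symm ⟨i, h⟩)).val else 0 with hu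
  have hule : ∀ i, u i ≤ 1 := by
    intro i
    rw [hu]
    dsimp only
    split
    · exact Nat.lt_succ_iff.mp (ZMod.val_lt _)
    · exact Nat.zero_le 1
  have hαlt : ∀ i, d / 2 * u i < d := by
    intro i
    have h1 : d / 2 * u i ≤ d / 2 * 1 := Nat.mul_le_mul_left _ (hule i)
    have h2 : d / 2 < d := Nat.div_lt_self (by omega) (by omega)
    omega
  set α : Fin (4*k) → Fin d := fun i => ⟨d / 2 * u i, hαlt i⟩ with hα
  have hαval : ∀ i, (α i : ℕ) = d / 2 * u i := fun i => rfl
  have hαQ : ∀ i ∈ Q, α i = 0 := by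
    intro i hi
    have hui : u i = 0 := by
      rw [hu]
      dsimp only
      rw [dif_neg (fun hc => (Finset.mem_compl.mp hc) hi)]
    apply Fin.ext
    rw [hαval, hui, Nat.mul_zero, Fin.val_zero]
  -- a nonzero coordinate
  obtain ⟨b, hb⟩ : ∃ b, v b ≠ 0 := by
    by_contra hc; push_neg at hc; exact hvne (funext hc)
  have hexist : ∃ i, (α i : ℕ) ≠ 0 := by
    refine ⟨(eB b : Fin (4*k)), ?_⟩
    have hmem : ((eB b : Fin (4*k))) ∈ Qᶜ := (eB b).2
    have hub : u (eB b) = 1 := by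
      rw [hu]
      dsimp only
      rw [dif_pos hmem, Subtype.coe_eta, OrderIso.symm_apply_apply]
      rw [zmod2_eq_one_of_ne_zero hb]
      rfl
    rw [hαval, hub, Nat.mul_one]
    omega
  -- key divisibility property
  have hwQ : ∀ j ∈ Q, (((∑ i, (α i : ℕ) * Γ i j) : ℕ) : ZMod d) = 0 := by
    intro j hj
    set nj : ℕ := ∑ i, u i * Γ i j with hnj
    have hstep : ∑ i, (α i : ℕ) * Γ i j = d / 2 * nj := by
      rw [hnj, Finset.mul_sum]
      exact Finset.sum_congr rfl fun i _ => by rw [hαval, Nat.mul_assoc]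
    have hcast2 : ((nj : ℕ) : ZMod 2) = 0 := by
      have hexp : ((nj : ℕ) : ZMod 2) = ∑ i, ((u i : ℕ) : ZMod 2) * ((Γ i j : ℕ) : ZMod 2) := by
        rw [hnj]; push_cast; rfl
      have hzero : ∀ i ∈ Finset.univ, i ∉ Qᶜ →
          ((u i : ℕ) : ZMod 2) * ((Γ i j : ℕ) : ZMod 2) = 0 := by
        intro i _ hi
        have hui : u i = 0 := by rw [hu]; dsimp only; rw [dif_neg hi]
        rw [hui, Nat.cast_zero, zero_mul]
      have hsub : (∑ i ∈ Qᶜ, ((u i : ℕ) : ZMod 2) * ((Γ i j : ℕ) : ZMod 2))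
          = ∑ c : Fin (2*k), v c * ((Γ (eB c : Fin (4*k)) j : ℕ) : ZMod 2) := by
        rw [← Finset.sum_coe_sort (Qᶜ)
          (fun i => ((u i : ℕ) : ZMod 2) * ((Γ (i : Fin (4*k)) j : ℕ) : ZMod 2))]
        rw [← Equiv.sum_comp eB.toEquiv
          (fun x : {x // x ∈ Qᶜ} => ((u x : ℕ) : ZMod 2) * ((Γ (x : Fin (4*k)) j : ℕ) : ZMod 2))]
        refine Finset.sum_congr rfl fun c _ => ?_
        have hmem : ((eB c : Fin (4*k))) ∈ Qᶜ := (eB c).2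
        have hub : ((u (eB c) : ℕ) : ZMod 2) = v c := by
          rw [hu]
          dsimp only
          rw [dif_pos hmem, Subtype.coe_eta, OrderIso.symm_apply_apply]
          exact ZMod.natCast_rightInverse (v c)
        show ((u (eB c) : ℕ) : ZMod 2) * _ = _
        rw [hub]
        rfl
      have hker' : ∑ c : Fin (2*k), ((Γ j (eB c : Fin (4*k)) : ℕ) : ZMod 2) * v c = 0 := by
        have h0 := congrFun hker (eQ.symm ⟨j, hj⟩)
        simp only [Matrix.mulVec, dotProduct, Matrix.of_apply, Pi.zero_apply] at h0
        have hcoe : ((eQ (eQ.symm ⟨j, hj⟩) : Fin (4*k))) = j := by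
          rw [OrderIso.apply_symm_apply]
        rw [hcoe] at h0
        exact h0
      rw [hexp, ← Finset.sum_subset (Finset.subset_univ Qᶜ) hzero, hsub]
      refine (Finset.sum_congr rfl fun c _ => ?_).trans hker'
      rw [mul_comm, show Γ ((eB c : Fin (4*k))) j = Γ j (eB c) from hsym2 _ _]
    obtain ⟨m, hm⟩ := (ZMod.natCast_eq_zero_iff nj 2).mp hcast2
    have h2d : (2:ℕ) ∣ d := by
      obtain ⟨t, ht⟩ := hdeven; exact ⟨t, by omega⟩
    have hfin : ∑ i, (α i : ℕ) * Γ i j = d * m := by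
      rw [hstep, hm, ← Nat.mul_assoc, Nat.div_mul_cancel h2d]
    rw [hfin]
    push_cast
    rw [ZMod.natCast_self, zero_mul]
  -- conclusion
  refine ⟨α, hexist, Q, hQ, ?_⟩
  intro hzero
  set f0 : {x : Fin (4*k) // x ∉ Q} → Fin d := fun x => α (x : Fin (4*k)) with hf0
  set g0 : {x : Fin (4*k) // x ∉ Q} → Fin d := fun _ => 0 with hg0
  have hentry : ptrace Q (stabElem d (4*k) Γ α) f0 g0 = 0 := by rw [hzero]; rfl
  rw [ptrace, Matrix.of_apply] at hentry
  obtain ⟨K, hK⟩ := cL_affine Γ α (List.finRange (4*k))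
  have hterm : ∀ h : {x : Fin (4*k) // x ∈ Q} → Fin d,
      stabElem d (4*k) Γ α (glue Q f0 h) (glue Q g0 h) = omg d ^ K.val := by
    intro h
    rw [stab_apply hd Γ hdiag]
    have hcond : glue Q f0 h = padd (glue Q g0 h) α := by
      funext x
      simp only [glue, padd]
      by_cases hx : x ∈ Q
      · rw [dif_pos hx, dif_pos hx, hαQ x hx, add_zero]
      · rw [dif_neg hx, dif_neg hx]
        show α x = (0 : Fin d) + α x
        rw [zero_add]
    rw [if_pos hcond]
    apply omg_pow_congr (show d ≠ 0 by omega)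
    rw [hK]
    have hsum0 : ∑ j, ((wsum Γ α (List.finRange (4*k)) j : ℕ) : ZMod d)
        * (((glue Q g0 h) j : ℕ) : ZMod d) = 0 := by
      refine Finset.sum_eq_zero fun j _ => ?_
      by_cases hj : j ∈ Q
      · rw [wsum_finRange, hwQ j hj, zero_mul]
      · have hg : glue Q g0 h j = 0 := by rw [glue]; rw [dif_neg hj]
        rw [hg, Fin.val_zero, Nat.cast_zero, mul_zero]
    rw [hsum0, add_zero]
    exact (ZMod.natCast_rightInverse K).symm
  rw [Finset.sum_congr rfl (fun h _ => hterm h), Finset.sum_const] at hentry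
  haveI : Nonempty ({x : Fin (4*k) // x ∈ Q} → Fin d) := ⟨fun _ => 0⟩
  rw [Finset.card_univ, nsmul_eq_mul] at hentry
  refine absurd hentry (mul_ne_zero ?_ (pow_ne_zero _ (omg_ne_zero d)))
  exact Nat.cast_ne_zero.mpr Fintype.card_ne_zero
end
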